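/- arXiv:2101.08746 — 6 statements merged into one kernel-verified Lean document; each statement's English description precedes it below -/
import Mathlib

section
/- Validity of the basic (binary) mixing/star inequality: Let r_1,…,r_N ≥ 0 and consider the mixing set M = {(t,z) ∈ ℝ_+ × {0,1}^N : t + r_i z_i ≥ r_i for all i ∈ [N]}. For any subset S = {s_1,…,s_ℓ} ⊆ [N] with r_{s_1} ≥ r_{s_2} ≥ ⋯ ≥ r_{s_ℓ}, and with the convention r_{s_{ℓ+1}} := 0, every (t,z) ∈ M satisfies t + Σ_{i=1}^{ℓ} (r_{s_i} − r_{s_{i+1}}) z_{s_i} ≥ r_{s_1}. -/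
/-!
Peel off the first index. If `z_{s_1} = 1`, the first term contributes `r_{s_1} - r_{s_2}` and
the inequality for `s_2, …, s_ℓ` supplies the rest. If `z_{s_1} = 0`, the mixing constraint gives
`t ≥ r_{s_1}` outright, and every term of the sum is nonnegative because the `r_{s_i}` decrease to
`r_{s_{ℓ+1}} = 0`.
-/

open Finset

theorem le_add_sum_sub_mul_of_binary {t : ℝ} (ht : 0 ≤ t) (n : ℕ) {b w : ℕ → ℝ}
    (hanti : ∀ k < n, b (k + 1) ≤ b k) (hbn : b n = 0) (hw : ∀ k < n, w k = 0 ∨ w k = 1)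
    (hmix : ∀ k < n, w k = 0 → b k ≤ t) :
    b 0 ≤ t + ∑ k ∈ range n, (b k - b (k + 1)) * w k := by
  induction n generalizing b w with
  | zero => simpa [hbn] using ht
  | succ n ih =>
    rcases hw 0 n.succ_pos with hw0 | hw0
    · have hsum : 0 ≤ ∑ k ∈ range (n + 1), (b k - b (k + 1)) * w k := by
        refine sum_nonneg fun k hk => mul_nonneg ?_ ?_
        · linarith [hanti k (mem_range.mp hk)]
        · rcases hw k (mem_range.mp hk) with h | h <;> simp [h]
      linarith [hmix 0 n.succ_pos hw0]
    · have htail := ih (b := fun k => b (k + 1)) (w := fun k => w (k + 1))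
        (fun k hk => hanti (k + 1) (by omega)) hbn
        (fun k hk => hw (k + 1) (by omega)) (fun k hk => hmix (k + 1) (by omega))
      rw [sum_range_succ', hw0]
      linarith

theorem mixing_star_valid_general (N ℓ : ℕ) (hℓ : 0 < ℓ) (r : Fin N → ℝ) (hr : ∀ i, 0 ≤ r i)
    (s : Fin ℓ → Fin N)
    (hsorted : ∀ i j : Fin ℓ, i ≤ j → r (s j) ≤ r (s i))
    (t : ℝ) (ht : 0 ≤ t) (z : Fin N → ℝ) (hz : ∀ i, z i = 0 ∨ z i = 1)
    (hmix : ∀ i, r i ≤ t + r i * z i) :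
    r (s ⟨0, hℓ⟩) ≤ t + ∑ i : Fin ℓ,
      (r (s i) - (if h : (i : ℕ) + 1 < ℓ then r (s ⟨(i : ℕ) + 1, h⟩) else 0)) * z (s i) := by
  -- `b` is `r ∘ s` extended by the convention `r_{s_{ℓ+1}} = 0`.
  set b : ℕ → ℝ := fun k => if h : k < ℓ then r (s ⟨k, h⟩) else 0 with hb_def
  set w : ℕ → ℝ := fun k => if h : k < ℓ then z (s ⟨k, h⟩) else 0
  have hb : ∀ k (hk : k < ℓ), b k = r (s ⟨k, hk⟩) := fun k hk => dif_pos hk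
  have hw : ∀ k (hk : k < ℓ), w k = z (s ⟨k, hk⟩) := fun k hk => dif_pos hk
  have hanti : ∀ k < ℓ, b (k + 1) ≤ b k := by
    intro k hk
    rw [hb k hk]
    by_cases hk1 : k + 1 < ℓ
    · exact (hb _ hk1).symm ▸ hsorted _ _ (Fin.mk_le_mk.mpr k.le_succ)
    · simpa [hb_def, hk1] using hr _
  have hstar := le_add_sum_sub_mul_of_binary ht ℓ hanti (dif_neg ℓ.lt_irrefl)
    (fun k hk => hw k hk ▸ hz _)
    (fun k hk hwk => by simpa [hb k hk, hw k hk ▸ hwk] using hmix (s ⟨k, hk⟩))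
  rw [← hb 0 hℓ]
  convert hstar using 2
  rw [← Fin.sum_univ_eq_sum_range]
  refine sum_congr rfl fun i _ => ?_
  rw [hb i i.isLt, hw i i.isLt]

/-- Validity of the basic (binary) mixing/star inequality. -/
theorem mixing_star_valid (N ℓ : ℕ) (hℓ : 0 < ℓ) (r : Fin N → ℝ) (hr : ∀ i, 0 ≤ r i)
    (s : Fin ℓ → Fin N) (hsinj : Function.Injective s)
    (hsorted : ∀ i j : Fin ℓ, i ≤ j → r (s j) ≤ r (s i))
    (t : ℝ) (ht : 0 ≤ t) (z : Fin N → ℝ) (hz : ∀ i, z i = 0 ∨ z i = 1)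
    (hmix : ∀ i, r i ≤ t + r i * z i) :
    r (s ⟨0, hℓ⟩) ≤ t + ∑ i : Fin ℓ,
      (r (s i) - (if h : (i : ℕ) + 1 < ℓ then r (s ⟨(i : ℕ) + 1, h⟩) else 0)) * z (s i) :=
  mixing_star_valid_general N ℓ hℓ r hr s hsorted t ht z hz hmix
end

section
/- Quantile strengthening of big-M: Let r_1,…,r_N ≥ 0, let k be a nonnegative integer with k < N, and let σ be a permutation of [N] with r_{σ_1} ≥ r_{σ_2} ≥ ⋯ ≥ r_{σ_N}. Then for any (t,z) ∈ ℝ_+ × {0,1}^N satisfying t + r_i z_i ≥ r_i for all i ∈ [N] and Σ_{i∈[N]} z_i ≤ k, it holds that t ≥ r_{σ_{k+1}}; consequently (t,z) also satisfies the strengthened constraints t + (r_i − r_{σ_{k+1}}) z_i ≥ r_i for all i ∈ [N]. -/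
/-!
At most `k` of the `z i` equal one, so among the `k + 1` indices with the largest `r`, namely
`σ 0, …, σ k`, some `σ j` has `z (σ j) = 0`. Its mixing constraint reads `r (σ j) ≤ t`, and
`r (σ k) ≤ r (σ j)` by the ordering. With `t ≥ r (σ k)` the strengthened constraint is immediate
in both cases `z i = 0` and `z i = 1`.
-/

open Finset

theorem exists_mem_eq_zero_of_sum_lt_card {ι : Type*} [Fintype ι] {z : ι → ℝ}
    (hz : ∀ i, z i = 0 ∨ z i = 1) {s : Finset ι} (hs : ∑ i, z i < #s) :
    ∃ i ∈ s, z i = 0 := by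
  by_contra! hne
  have hone : ∀ i ∈ s, z i = 1 := fun i hi => (hz i).resolve_left (hne i hi)
  have hnonneg : ∀ i, 0 ≤ z i := fun i => by rcases hz i with h | h <;> simp [h]
  have : (#s : ℝ) ≤ ∑ i, z i :=
    calc (#s : ℝ) = ∑ i ∈ s, z i := by simp [sum_congr rfl hone]
      _ ≤ ∑ i, z i := sum_le_univ_sum_of_nonneg hnonneg
  linarith

theorem quantile_le_of_mixing {N k : ℕ} (hk : k < N) {r : Fin N → ℝ} {σ : Equiv.Perm (Fin N)}
    (hsorted : Antitone (r ∘ σ)) {t : ℝ} {z : Fin N → ℝ} (hz : ∀ i, z i = 0 ∨ z i = 1)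
    (hmix : ∀ i, r i ≤ t + r i * z i) (hcard : ∑ i, z i ≤ (k : ℝ)) :
    r (σ ⟨k, hk⟩) ≤ t := by
  have hs : ∑ i, z i < #((Iic (⟨k, hk⟩ : Fin N)).map σ.toEmbedding) := by
    rw [card_map, Fin.card_Iic]
    push_cast
    linarith
  obtain ⟨i, hi, hzi⟩ := exists_mem_eq_zero_of_sum_lt_card hz hs
  obtain ⟨j, hj, rfl⟩ := mem_map.mp hi
  calc r (σ ⟨k, hk⟩) ≤ r (σ j) := hsorted (mem_Iic.mp hj)
    _ ≤ t := by simpa [show z (σ j) = 0 from hzi] using hmix (σ j)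

theorem strengthened_mixing_of_le {r t q z : ℝ} (hz : z = 0 ∨ z = 1) (hmix : r ≤ t + r * z)
    (hq : q ≤ t) : r ≤ t + (r - q) * z := by
  rcases hz with rfl | rfl <;> linarith

theorem quantile_strengthening_general (N k : ℕ) (hk : k < N) (r : Fin N → ℝ)
    (σ : Equiv.Perm (Fin N))
    (hsorted : ∀ i j : Fin N, i ≤ j → r (σ j) ≤ r (σ i))
    (t : ℝ) (z : Fin N → ℝ) (hz : ∀ i, z i = 0 ∨ z i = 1)
    (hmix : ∀ i, r i ≤ t + r i * z i)
    (hcard : ∑ i, z i ≤ (k : ℝ)) :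
    r (σ ⟨k, hk⟩) ≤ t ∧ ∀ i, r i ≤ t + (r i - r (σ ⟨k, hk⟩)) * z i := by
  have hquantile := quantile_le_of_mixing hk (fun i j hij => hsorted i j hij) hz hmix hcard
  exact ⟨hquantile, fun i => strengthened_mixing_of_le (hz i) (hmix i) hquantile⟩

/-- Quantile strengthening of big-M: under the cardinality constraint,
t ≥ r_{σ_{k+1}} and the strengthened mixing constraints hold. -/
theorem quantile_strengthening (N k : ℕ) (hk : k < N) (r : Fin N → ℝ) (hr : ∀ i, 0 ≤ r i)
    (σ : Equiv.Perm (Fin N))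
    (hsorted : ∀ i j : Fin N, i ≤ j → r (σ j) ≤ r (σ i))
    (t : ℝ) (ht : 0 ≤ t) (z : Fin N → ℝ) (hz : ∀ i, z i = 0 ∨ z i = 1)
    (hmix : ∀ i, r i ≤ t + r i * z i)
    (hcard : ∑ i, z i ≤ (k : ℝ)) :
    r (σ ⟨k, hk⟩) ≤ t ∧ ∀ i, r i ≤ t + (r i - r (σ ⟨k, hk⟩)) * z i :=
  quantile_strengthening_general N k hk r σ hsorted t z hz hmix hcard
end

section
/- Validity of the strengthened mixing inequality with cardinality: Let r ∈ ℝ_+^N, k < N an integer, σ a permutation of [N] with r_{σ_1} ≥ ⋯ ≥ r_{σ_N}. Let S = {s_1,…,s_ℓ} ⊆ {σ_1,…,σ_k} satisfy r_{s_1} ≥ ⋯ ≥ r_{s_ℓ}, with s_1 = σ_1 and the convention r_{s_{ℓ+1}} := r_{σ_{k+1}}. Then every (t,z) ∈ ℝ_+ × {0,1}^N with t + r_i z_i ≥ r_i for all i and Σ_i z_i ≤ k satisfies t + Σ_{i=1}^{ℓ} (r_{s_i} − r_{s_{i+1}}) z_{s_i} ≥ r_{s_1}. -/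
/-!
Pad the sequence `r_{s_1} ≥ ⋯ ≥ r_{s_ℓ}` with `r_{s_{ℓ+1}} := r_{σ_{k+1}}`. The cardinality bound
forces `r_{σ_{k+1}} ≤ t`: otherwise all `k + 1` largest coordinates would need `z_i = 1`. The left
side of the inequality telescopes along the initial run of indices `s_i` with `z_{s_i} = 1` down
to the first padded value `r_{s_m}` with `z_{s_m} = 0` (or `m = ℓ + 1`), and that value is at most `t`.
-/

open Finset

theorem Antitone.le_add_sum_range_sub_mul {g w : ℕ → ℝ} {t : ℝ} (hg : Antitone g) {n : ℕ}
    (hw : ∀ j < n, w j = 0 ∨ w j = 1) (hzero : ∀ j < n, w j = 0 → g j ≤ t) (hn : g n ≤ t) :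
    g 0 ≤ t + ∑ j ∈ range n, (g j - g (j + 1)) * w j := by
  induction n generalizing g w with
  | zero => simpa using hn
  | succ n ih =>
    have htail := ih (g := fun j => g (j + 1)) (w := fun j => w (j + 1))
      (fun a b hab => hg (by omega)) (fun j hj => hw _ (by omega))
      (fun j hj => hzero _ (by omega)) hn
    rw [sum_range_succ']
    rcases hw 0 n.succ_pos with h0 | h1
    · have hrest : 0 ≤ ∑ j ∈ range n, (g (j + 1) - g (j + 1 + 1)) * w (j + 1) :=
        sum_nonneg fun j hj => mul_nonneg (sub_nonneg.2 (hg j.succ.le_succ))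
          (by rcases hw (j + 1) (by rw [mem_range] at hj; omega) with h | h <;> simp [h])
      rw [h0, mul_zero]
      linarith [hzero 0 n.succ_pos h0]
    · rw [h1]
      linarith

theorem card_filter_lt_le_sum_of_mixing {ι : Type*} [Fintype ι] {r z : ι → ℝ} {t : ℝ}
    (hz : ∀ i, z i = 0 ∨ z i = 1) (hmix : ∀ i, r i ≤ t + r i * z i) :
    (#{i | t < r i} : ℝ) ≤ ∑ i, z i := by
  have hone : ∀ i ∈ ({i | t < r i} : Finset ι), z i = 1 := fun i hi =>
    (hz i).resolve_left fun h0 => by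
      have := hmix i
      simp only [mem_filter, mem_univ, true_and] at hi
      rw [h0] at this
      linarith
  calc (#{i | t < r i} : ℝ) = ∑ i ∈ {i | t < r i}, z i := by
        rw [sum_congr rfl hone]; simp
    _ ≤ ∑ i, z i := sum_le_sum_of_subset_of_nonneg (subset_univ _)
        fun i _ _ => by rcases hz i with h | h <;> simp [h]

theorem Equiv.Perm.le_of_card_filter_lt_le {N k : ℕ} (hk : k < N) {r : Fin N → ℝ} {t : ℝ}
    (σ : Equiv.Perm (Fin N)) (hsorted : ∀ i j : Fin N, i ≤ j → r (σ j) ≤ r (σ i))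
    (hcard : #{i | t < r i} ≤ k) : r (σ ⟨k, hk⟩) ≤ t := by
  by_contra! hlt
  let e : Fin (k + 1) ↪ Fin N := ⟨σ ∘ Fin.castLE hk, σ.injective.comp (Fin.castLE_injective hk)⟩
  have hsub : univ.map e ⊆ ({i | t < r i} : Finset (Fin N)) := by
    intro i hi
    obtain ⟨j, -, rfl⟩ := mem_map.1 hi
    simp only [mem_filter, mem_univ, true_and]
    exact hlt.trans_le (hsorted _ _ (Fin.le_def.2 (by simp only [Fin.val_castLE]; omega)))
  have := card_le_card hsub
  rw [card_map, card_univ, Fintype.card_fin] at this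
  omega

def Fin.extendNat {α : Type*} {n : ℕ} (f : Fin n → α) (d : α) (j : ℕ) : α :=
  if h : j < n then f ⟨j, h⟩ else d

theorem Fin.antitone_extendNat {α : Type*} [Preorder α] {n : ℕ} {f : Fin n → α} {d : α}
    (hf : Antitone f) (hd : ∀ i, d ≤ f i) : Antitone (Fin.extendNat f d) := by
  intro a b hab
  unfold Fin.extendNat
  split_ifs with hb ha ha
  · exact hf (Fin.mk_le_mk.2 hab)
  · omega
  · exact hd _
  · exact le_rfl

theorem strengthened_mixing_valid_general (N k ℓ : ℕ) (hk : k < N) (hℓ : 0 < ℓ)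
    (r : Fin N → ℝ)
    (σ : Equiv.Perm (Fin N))
    (hsorted : ∀ i j : Fin N, i ≤ j → r (σ j) ≤ r (σ i))
    (s : Fin ℓ → Fin N)
    (hsub : ∀ i : Fin ℓ, ∃ j : Fin N, (j : ℕ) < k ∧ s i = σ j)
    (hssorted : ∀ i j : Fin ℓ, i ≤ j → r (s j) ≤ r (s i))
    (t : ℝ) (z : Fin N → ℝ) (hz : ∀ i, z i = 0 ∨ z i = 1)
    (hmix : ∀ i, r i ≤ t + r i * z i)
    (hcard : ∑ i, z i ≤ (k : ℝ)) :
    r (s ⟨0, hℓ⟩) ≤ t + ∑ i : Fin ℓ,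
      (r (s i) - (if h : (i : ℕ) + 1 < ℓ then r (s ⟨(i : ℕ) + 1, h⟩)
        else r (σ ⟨k, hk⟩))) * z (s i) := by
  set g := Fin.extendNat (fun i => r (s i)) (r (σ ⟨k, hk⟩))
  set w := Fin.extendNat (fun i => z (s i)) 1
  have hg : Antitone g := Fin.antitone_extendNat (fun i j hij => hssorted i j hij) fun i => by
    obtain ⟨j, hj, hsj⟩ := hsub i
    exact hsj ▸ hsorted _ _ (Fin.le_def.2 hj.le)
  have hcut : r (σ ⟨k, hk⟩) ≤ t := σ.le_of_card_filter_lt_le hk hsorted <| by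
    exact_mod_cast (card_filter_lt_le_sum_of_mixing hz hmix).trans hcard
  have hzero : ∀ j < ℓ, w j = 0 → g j ≤ t := fun j hj h0 => by
    simp only [w, g, Fin.extendNat, hj, dif_pos] at h0 ⊢
    simpa [h0] using hmix (s ⟨j, hj⟩)
  have key := hg.le_add_sum_range_sub_mul (fun j hj => by simp [w, Fin.extendNat, hj, hz]) hzero
    (by simpa [g, Fin.extendNat] using hcut)
  rw [← Fin.sum_univ_eq_sum_range] at key
  simpa [g, w, Fin.extendNat, hℓ] using key

/-- Validity of the strengthened mixing inequality with a cardinality constraint. -/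
theorem strengthened_mixing_valid (N k ℓ : ℕ) (hk : k < N) (hℓ : 0 < ℓ)
    (r : Fin N → ℝ) (hr : ∀ i, 0 ≤ r i)
    (σ : Equiv.Perm (Fin N))
    (hsorted : ∀ i j : Fin N, i ≤ j → r (σ j) ≤ r (σ i))
    (s : Fin ℓ → Fin N) (hsinj : Function.Injective s)
    (hsub : ∀ i : Fin ℓ, ∃ j : Fin N, (j : ℕ) < k ∧ s i = σ j)
    (hs1 : s ⟨0, hℓ⟩ = σ ⟨0, Nat.lt_of_le_of_lt (Nat.zero_le k) hk⟩)
    (hssorted : ∀ i j : Fin ℓ, i ≤ j → r (s j) ≤ r (s i))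
    (t : ℝ) (ht : 0 ≤ t) (z : Fin N → ℝ) (hz : ∀ i, z i = 0 ∨ z i = 1)
    (hmix : ∀ i, r i ≤ t + r i * z i)
    (hcard : ∑ i, z i ≤ (k : ℝ)) :
    r (s ⟨0, hℓ⟩) ≤ t + ∑ i : Fin ℓ,
      (r (s i) - (if h : (i : ℕ) + 1 < ℓ then r (s ⟨(i : ℕ) + 1, h⟩)
        else r (σ ⟨k, hk⟩))) * z (s i) :=
  strengthened_mixing_valid_general N k ℓ hk hℓ r σ hsorted s hsub hssorted t z hz hmix hcard
end

section
/- Validity of the quantile cut: Fix φ ∈ ℝ^n, finitely many scenarios ω_1,…,ω_N each with probability 1/N, sets P(ω_i) ⊆ ℝ^n and X ⊆ ℝ^n, and let q_i := inf{ φᵀx : x ∈ P(ω_i) ∩ X } for each i. Sort so that q_{σ_1} ≥ q_{σ_2} ≥ ⋯ ≥ q_{σ_N}, and let k := ⌊εN⌋ with ε ∈ (0,1). Then every x ∈ X satisfying the sample chance constraint (1/N)·#{ i : x ∉ P(ω_i) } ≤ ε satisfies φᵀx ≥ q_{σ_{k+1}}. -/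
/-!
If `x` violates at most `k = ⌊εN⌋` scenarios, then among the `k + 1` scenarios with the largest
bounds `q_{σ_1}, …, q_{σ_{k+1}}` there is one, `ω_i`, with `x ∈ P(ω_i) ∩ X`. Hence
`φᵀx ≥ q_i ≥ q_{σ_{k+1}}`.
-/

open scoped Classical

theorem Nat.le_floor_mul_of_one_div_mul_le {N c : ℕ} {ε : ℝ} (hN : 0 < N)
    (h : 1 / (N : ℝ) * c ≤ ε) : c ≤ ⌊ε * N⌋₊ := by
  have hNpos : (0 : ℝ) < N := by exact_mod_cast hN
  rw [one_div_mul_eq_div, div_le_iff₀ hNpos] at h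
  exact Nat.le_floor h

theorem Equiv.Perm.exists_le_apply_notMem {N : ℕ} (σ : Equiv.Perm (Fin N))
    (B : Finset (Fin N)) (k : Fin N) (hB : B.card ≤ k) : ∃ j ≤ k, σ j ∉ B := by
  have hcard : B.card < ((Finset.Iic k).image σ).card := by
    rw [Finset.card_image_of_injective _ σ.injective, Fin.card_Iic]
    omega
  obtain ⟨_, hi, hiB⟩ := Finset.exists_mem_notMem_of_card_lt_card hcard
  obtain ⟨j, hj, rfl⟩ := Finset.mem_image.mp hi
  exact ⟨j, Finset.mem_Iic.mp hj, hiB⟩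

theorem Antitone.apply_le_of_le_off_card_le {α : Type*} [Preorder α] {N : ℕ}
    {q : Fin N → α} {σ : Equiv.Perm (Fin N)} (hsorted : Antitone (q ∘ σ))
    (k : Fin N) (B : Finset (Fin N)) (hB : B.card ≤ k) {v : α}
    (hv : ∀ i ∉ B, q i ≤ v) : q (σ k) ≤ v := by
  obtain ⟨j, hjk, hj⟩ := σ.exists_le_apply_notMem B k hB
  exact (hsorted hjk).trans (hv _ hj)

theorem quantile_cut_valid_general (N n : ℕ) (ε : ℝ)
    (P : Fin N → Set (Fin n → ℝ)) (X : Set (Fin n → ℝ)) (φ : Fin n → ℝ)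
    (q : Fin N → ℝ)
    (hq : ∀ i, IsGLB {c : ℝ | ∃ y, y ∈ P i ∧ y ∈ X ∧ c = ∑ j, φ j * y j} (q i))
    (σ : Equiv.Perm (Fin N))
    (hsorted : ∀ i j : Fin N, i ≤ j → q (σ j) ≤ q (σ i))
    (hk : Nat.floor (ε * N) < N)
    (x : Fin n → ℝ) (hxX : x ∈ X)
    (hcc : (1 / (N : ℝ)) *
      ((Finset.univ.filter (fun i : Fin N => x ∉ P i)).card : ℝ) ≤ ε) :
    q (σ ⟨Nat.floor (ε * N), hk⟩) ≤ ∑ j, φ j * x j := by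
  have hviolated := Nat.le_floor_mul_of_one_div_mul_le (Nat.zero_lt_of_lt hk) hcc
  refine Antitone.apply_le_of_le_off_card_le (fun i j hij => hsorted i j hij) _ _ hviolated ?_
  intro i hi
  have hxP : x ∈ P i := by simpa using hi
  exact (hq i).1 ⟨x, hxP, hxX, rfl⟩

/-- Validity of the quantile cut for sample chance constraints. -/
theorem quantile_cut_valid (N n : ℕ) (hN : 0 < N) (ε : ℝ) (hε : ε ∈ Set.Ioo (0:ℝ) 1)
    (P : Fin N → Set (Fin n → ℝ)) (X : Set (Fin n → ℝ)) (φ : Fin n → ℝ)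
    (q : Fin N → ℝ)
    (hq : ∀ i, IsGLB {c : ℝ | ∃ y, y ∈ P i ∧ y ∈ X ∧ c = ∑ j, φ j * y j} (q i))
    (σ : Equiv.Perm (Fin N))
    (hsorted : ∀ i j : Fin N, i ≤ j → q (σ j) ≤ q (σ i))
    (hk : Nat.floor (ε * N) < N)
    (x : Fin n → ℝ) (hxX : x ∈ X)
    (hcc : (1 / (N : ℝ)) *
      ((Finset.univ.filter (fun i : Fin N => x ∉ P i)).card : ℝ) ≤ ε) :
    q (σ ⟨Nat.floor (ε * N), hk⟩) ≤ ∑ j, φ j * x j :=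
  quantile_cut_valid_general N n ε P X φ q hq σ hsorted hk x hxX hcc
end

section
/- Validity of the strong Benders optimality cut: Fix a scenario with dual vector ψ ≥ 0, data T, r, and a compact set X ⊆ ℝ^n. Let h(x) denote the second-stage optimal value and suppose the weak duality bound h(x) ≥ ψᵀ(r − Tx) holds for all x ∈ X, and h(x) ≥ 0. Let v̄ := min{ ψᵀT x : x ∈ X } (attained). Then for every x ∈ X, z ∈ {0,1}, and η ≥ 0 such that η ≥ h(x) whenever z = 0, the inequality η + (ψᵀr − v̄)·z ≥ ψᵀ(r − Tx) holds. -/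
lemma sum_mul_sub_mulVec_le_of_isLeast {ι κ : Type*} [Fintype ι] [Fintype κ] (ψ : ι → ℝ)
    (T : Matrix ι κ ℝ) (r : ι → ℝ) {X : Set (κ → ℝ)} {vbar : ℝ}
    (hvbar : IsLeast {c : ℝ | ∃ x ∈ X, c = ∑ j, ψ j * T.mulVec x j} vbar) {x : κ → ℝ}
    (hx : x ∈ X) :
    ∑ j, ψ j * (r j - T.mulVec x j) ≤ (∑ j, ψ j * r j) - vbar := by
  have hle : vbar ≤ ∑ j, ψ j * T.mulVec x j := hvbar.2 ⟨x, hx, rfl⟩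
  simp only [mul_sub, Finset.sum_sub_distrib]
  linarith

theorem strong_benders_cut_valid_general (m n : ℕ)
    (ψ : Fin m → ℝ)
    (T : Matrix (Fin m) (Fin n) ℝ) (r : Fin m → ℝ)
    (X : Set (Fin n → ℝ))
    (h : (Fin n → ℝ) → ℝ)
    (hweak : ∀ x ∈ X, ∑ j, ψ j * (r j - T.mulVec x j) ≤ h x)
    (vbar : ℝ)
    (hvbar : IsLeast {c : ℝ | ∃ x ∈ X, c = ∑ j, ψ j * T.mulVec x j} vbar) :
    ∀ x ∈ X, ∀ z : ℝ, (z = 0 ∨ z = 1) → ∀ η : ℝ, 0 ≤ η →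
      (z = 0 → h x ≤ η) →
      ∑ j, ψ j * (r j - T.mulVec x j) ≤ η + ((∑ j, ψ j * r j) - vbar) * z := by
  rintro x hx z (rfl | rfl) η hη hηh
  · simpa using (hweak x hx).trans (hηh rfl)
  · have := sum_mul_sub_mulVec_le_of_isLeast ψ T r hvbar hx
    linarith

/-- Validity of the strong Benders optimality cut for two-stage
chance-constrained programs. -/
theorem strong_benders_cut_valid (m n : ℕ)
    (ψ : Fin m → ℝ) (hψ : ∀ j, 0 ≤ ψ j)
    (T : Matrix (Fin m) (Fin n) ℝ) (r : Fin m → ℝ)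
    (X : Set (Fin n → ℝ)) (hX : IsCompact X)
    (h : (Fin n → ℝ) → ℝ)
    (hweak : ∀ x ∈ X, ∑ j, ψ j * (r j - T.mulVec x j) ≤ h x)
    (hnonneg : ∀ x ∈ X, 0 ≤ h x)
    (vbar : ℝ)
    (hvbar : IsLeast {c : ℝ | ∃ x ∈ X, c = ∑ j, ψ j * T.mulVec x j} vbar) :
    ∀ x ∈ X, ∀ z : ℝ, (z = 0 ∨ z = 1) → ∀ η : ℝ, 0 ≤ η →
      (z = 0 → h x ≤ η) →
      ∑ j, ψ j * (r j - T.mulVec x j) ≤ η + ((∑ j, ψ j * r j) - vbar) * z :=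
  strong_benders_cut_valid_general m n ψ T r X h hweak vbar hvbar
end

section
/- Distance to the unsafe set for a polyhedral safety set with RHS uncertainty: Let S(x) := { ω ∈ ℝ^d : Tx ≥ Bω + e } where T ∈ ℝ^{m×n}, B ∈ ℝ^{m×d} with each row B_j ≠ 0, and e ∈ ℝ^m. Then for any ω ∈ ℝ^d and x ∈ ℝ^n, the distance dist(ω, ℝ^d ∖ S(x)) := inf{ ‖ω − ω′‖ : ω′ ∉ S(x) } (with respect to a norm ‖·‖ with dual norm ‖·‖_*) equals max{ 0, min_{j∈[m]} (T_j x − B_j ω − e_j)/‖B_j‖_* }. -/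
/-!
Each unsafe realization violates some constraint `j`, i.e. lies in the open half-space
`b j < f j ω'` with `f j = ⟪B j, ·⟫` and `b j = T j x - e j`. The dual-norm inequality
`f j v ≤ ‖B j‖_* · ‖v‖` shows that reaching this half-space from `ω` costs at least
`(b j - f j ω) / ‖B j‖_*`, and moving from `ω` along an almost-maximizer of `f j` on the unit
ball shows that any radius `t > max 0 ((b j - f j ω) / ‖B j‖_*)` suffices. Minimizing over `j`
gives the formula.
-/

open Finset

namespace LinearMap

variable {E : Type*} [AddCommGroup E] [Module ℝ E] {p : Seminorm ℝ E} {f : E →ₗ[ℝ] ℝ} {δ : ℝ}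

theorem le_mul_seminorm_of_isLUB (hδ : IsLUB (f '' p.closedBall 0 1) δ) (v : E) :
    f v ≤ δ * p v := by
  have bound : ∀ u, p u ≤ 1 → f u ≤ δ := fun u hu =>
    hδ.1 ⟨u, (p.mem_closedBall_zero).2 hu, rfl⟩
  rcases (apply_nonneg p v).eq_or_lt with hv | hv
  · -- On the kernel of `p` every multiple of `v` lies in the unit ball, so `f v > 0` is impossible.
    rw [← hv, mul_zero]
    by_contra! hfv
    obtain ⟨k, hk⟩ := exists_nat_gt (δ / f v)
    have hkv : f ((k : ℝ) • v) ≤ δ :=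
      bound _ (by rw [map_smul_eq_mul, ← hv, mul_zero]; exact zero_le_one)
    rw [map_smul, smul_eq_mul] at hkv
    rw [div_lt_iff₀ hfv] at hk
    linarith
  · have hunit : f ((p v)⁻¹ • v) ≤ δ :=
      bound _ (by rw [map_smul_eq_mul, Real.norm_eq_abs, abs_inv, abs_of_pos hv,
        inv_mul_cancel₀ hv.ne'])
    rw [map_smul, smul_eq_mul, inv_mul_le_iff₀ hv] at hunit
    linarith

theorem pos_of_isLUB_seminorm (hδ : IsLUB (f '' p.closedBall 0 1) δ) (hf : f ≠ 0) : 0 < δ := by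
  obtain ⟨v, hv⟩ := surjective_of_ne_zero hf 1
  have h := le_mul_seminorm_of_isLUB hδ v
  rw [hv] at h
  exact pos_of_mul_pos_left (one_pos.trans_le h) (apply_nonneg p v)

theorem exists_seminorm_le_lt_apply_add (hδ : IsLUB (f '' p.closedBall 0 1) δ) (ω : E)
    {b t : ℝ} (ht : 0 < t) (hb : b - f ω < t * δ) : ∃ u, p u ≤ t ∧ b < f (ω + u) := by
  rw [mul_comm, ← div_lt_iff₀ ht] at hb
  obtain ⟨_, ⟨u, hu, rfl⟩, hlt⟩ := (lt_isLUB_iff hδ).1 hb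
  refine ⟨t • u, ?_, ?_⟩
  · rw [map_smul_eq_mul, Real.norm_eq_abs, abs_of_pos ht]
    exact mul_le_of_le_one_right ht.le ((p.mem_closedBall_zero).1 hu)
  · rw [div_lt_iff₀ ht] at hlt
    rw [map_add, map_smul, smul_eq_mul]
    linarith

end LinearMap

theorem sInf_seminorm_sub_union_halfspaces {E ι : Type*} [AddCommGroup E] [Module ℝ E]
    [Fintype ι] (hι : (univ : Finset ι).Nonempty) (p : Seminorm ℝ E) (f : ι → E →ₗ[ℝ] ℝ)
    (hf : ∀ j, f j ≠ 0) (δ : ι → ℝ) (hδ : ∀ j, IsLUB (f j '' p.closedBall 0 1) (δ j))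
    (b : ι → ℝ) (ω : E) :
    sInf ((fun ω' => p (ω - ω')) '' {ω' | ∃ j, b j < f j ω'}) =
      max 0 (univ.inf' hι fun j => (b j - f j ω) / δ j) := by
  set M := max 0 (univ.inf' hι fun j => (b j - f j ω) / δ j)
  have hδpos : ∀ j, 0 < δ j := fun j => (f j).pos_of_isLUB_seminorm (hδ j) (hf j)
  have reach : ∀ w, M < w → ∃ ω', (∃ j, b j < f j ω') ∧ p (ω - ω') < w := by
    intro w hw
    obtain ⟨t, hMt, htw⟩ := exists_between hw
    obtain ⟨j, -, hj⟩ := exists_mem_eq_inf' hι fun j => (b j - f j ω) / δ j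
    have hgt : (b j - f j ω) / δ j < t := hj ▸ (le_max_right _ _).trans_lt hMt
    rw [div_lt_iff₀ (hδpos j)] at hgt
    obtain ⟨u, hut, hu⟩ := (f j).exists_seminorm_le_lt_apply_add (hδ j) ω
      ((le_max_left _ _).trans_lt hMt) hgt
    exact ⟨ω + u, ⟨j, hu⟩, by
      rw [sub_add_cancel_left, map_neg_eq_map]; exact hut.trans_lt htw⟩
  refine csInf_eq_of_forall_ge_of_forall_gt_exists_lt ?_ ?_ ?_
  · obtain ⟨ω', hω', -⟩ := reach (M + 1) (lt_add_one M)
    exact ⟨_, ω', hω', rfl⟩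
  · rintro _ ⟨ω', ⟨j, hj⟩, rfl⟩
    refine max_le (apply_nonneg p _) ((inf'_le _ (mem_univ j)).trans ?_)
    rw [div_le_iff₀ (hδpos j)]
    have hdual := (f j).le_mul_seminorm_of_isLUB (hδ j) (ω' - ω)
    rw [map_sub, map_sub_rev] at hdual
    linarith
  · intro w hw
    obtain ⟨ω', hω', hlt⟩ := reach w hw
    exact ⟨_, ⟨ω', hω', rfl⟩, hlt⟩

theorem dist_to_unsafe_set_general (d m n : ℕ) (hm : 0 < m)
    (T : Matrix (Fin m) (Fin n) ℝ) (B : Matrix (Fin m) (Fin d) ℝ) (e : Fin m → ℝ)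
    (hB : ∀ j, B j ≠ 0)
    (nrm : (Fin d → ℝ) → ℝ)
    (hhom : ∀ (c : ℝ) (ω), nrm (c • ω) = |c| * nrm ω)
    (htri : ∀ ω ω', nrm (ω + ω') ≤ nrm ω + nrm ω')
    (dual : Fin m → ℝ)
    (hdual : ∀ j, IsLUB {c : ℝ | ∃ ω, nrm ω ≤ 1 ∧ c = ∑ i, B j i * ω i} (dual j))
    (x : Fin n → ℝ) (ω : Fin d → ℝ) :
    sInf {c : ℝ | ∃ ω' : Fin d → ℝ,
        (¬ ∀ j, ∑ i, B j i * ω' i + e j ≤ T.mulVec x j) ∧ c = nrm (ω - ω')} =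
      max 0 (Finset.univ.inf' (Finset.univ_nonempty_iff.mpr ⟨⟨0, hm⟩⟩)
        (fun j => (T.mulVec x j - (∑ i, B j i * ω i) - e j) / dual j)) := by
  let p : Seminorm ℝ (Fin d → ℝ) := Seminorm.of nrm htri fun c v => by
    rw [hhom, Real.norm_eq_abs]
  let f : Fin m → (Fin d → ℝ) →ₗ[ℝ] ℝ := fun j => LinearMap.proj j ∘ₗ B.mulVecLin
  have hp : ∀ v, p v = nrm v := fun _ => rfl
  have hfj : ∀ j v, f j v = ∑ i, B j i * v i := fun _ _ => rfl
  have hf : ∀ j, f j ≠ 0 := fun j hj =>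
    hB j (dotProduct_self_eq_zero.1 (LinearMap.congr_fun hj (B j)))
  have hδ : ∀ j, IsLUB (f j '' p.closedBall 0 1) (dual j) := fun j => by
    convert hdual j using 1
    ext c
    simp [hp, hfj, eq_comm]
  convert sInf_seminorm_sub_union_halfspaces (univ_nonempty_iff.mpr ⟨⟨0, hm⟩⟩) p f hf dual hδ
    (fun j => T.mulVec x j - e j) ω using 2
  · ext c
    simp [hp, hfj, sub_lt_iff_lt_add, eq_comm]
  · refine inf'_congr _ rfl fun j _ => ?_
    rw [hfj]
    ring

/-- Distance from a realization ω to the unsafe set (complement of the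
polyhedral safety set with RHS uncertainty), for a general norm `nrm` on ℝ^d
with dual norm given by `dual`. -/
theorem dist_to_unsafe_set (d m n : ℕ) (hm : 0 < m)
    (T : Matrix (Fin m) (Fin n) ℝ) (B : Matrix (Fin m) (Fin d) ℝ) (e : Fin m → ℝ)
    (hB : ∀ j, B j ≠ 0)
    (nrm : (Fin d → ℝ) → ℝ)
    (hnn : ∀ ω, 0 ≤ nrm ω)
    (hzero : ∀ ω, nrm ω = 0 ↔ ω = 0)
    (hhom : ∀ (c : ℝ) (ω), nrm (c • ω) = |c| * nrm ω)
    (htri : ∀ ω ω', nrm (ω + ω') ≤ nrm ω + nrm ω')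
    (dual : Fin m → ℝ)
    (hdual : ∀ j, IsLUB {c : ℝ | ∃ ω, nrm ω ≤ 1 ∧ c = ∑ i, B j i * ω i} (dual j))
    (x : Fin n → ℝ) (ω : Fin d → ℝ)
    (hne : ∃ ω' : Fin d → ℝ, ¬ ∀ j, ∑ i, B j i * ω' i + e j ≤ T.mulVec x j) :
    sInf {c : ℝ | ∃ ω' : Fin d → ℝ,
        (¬ ∀ j, ∑ i, B j i * ω' i + e j ≤ T.mulVec x j) ∧ c = nrm (ω - ω')} =
      max 0 (Finset.univ.inf' (Finset.univ_nonempty_iff.mpr ⟨⟨0, hm⟩⟩)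
        (fun j => (T.mulVec x j - (∑ i, B j i * ω i) - e j) / dual j)) :=
  dist_to_unsafe_set_general d m n hm T B e hB nrm hhom htri dual hdual x ω
end
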